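/- Let D be a 2-(k²,k,λ) design with λ | k admitting a flag-transitive automorphism group G with simple socle X. For any point x and any point y ≠ x, the integer (k+1)/gcd(k+1, |Out(X)|) divides |y^{X_x}| and hence divides |X_x|. -/

import Mathlib

/-! Counting flags through `x` gives `r = λ(k+1)` blocks through `x`, and flag-transitivity makes
every block through `x` meet a `G_x`-orbit `O ∌ x` in the same number `m` of points, so that
`λ|O| = r m` and `k + 1 ∣ |O|`. The `G_x`-orbit of `y` is a union of `e` orbits of the normal
subgroup `X_x` of equal size, where `e` divides `[G_x : X_x] ∣ [G : X]`, and `[G : X]` divides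
`|Out(X)|` because `C_G(X) = 1` makes `X` the kernel of the conjugation map `G → Out(X)`. -/

open MulAction Subgroup Finset

theorem Nat.div_gcd_dvd_of_dvd_mul {a n b : ℕ} (ha : 0 < a) (h : a ∣ n * b) :
    a / a.gcd n ∣ b := by
  have hg : 0 < a.gcd n := Nat.gcd_pos_of_pos_left n ha
  refine (Nat.coprime_div_gcd_div_gcd hg).dvd_of_dvd_mul_left ?_
  rw [← Nat.mul_div_right_comm (Nat.gcd_dvd_right a n)]
  exact Nat.div_dvd_div (Nat.gcd_dvd_left a n) h

section Orbits

variable {G α : Type*} [Group G] [MulAction G α]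

theorem Subgroup.index_eq_index_sup_mul_relIndex [Finite G] (S N : Subgroup G) [N.Normal] :
    S.index = (S ⊔ N).index * S.relIndex N := by
  have hS : (S ⊓ N).index = N.relIndex S * S.index := by
    rw [← relIndex_mul_index inf_le_left, inf_comm, inf_relIndex_right]
  have hN : (S ⊓ N).index = N.relIndex S * ((S ⊔ N).index * S.relIndex N) := by
    rw [← relIndex_mul_index inf_le_right, inf_relIndex_right,
      ← relIndex_mul_index (le_sup_right : N ≤ S ⊔ N), relIndex_sup_right]
    ring
  exact Nat.eq_of_mul_eq_mul_left (Nat.pos_of_ne_zero index_ne_zero_of_finite) (hS.symm.trans hN)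

theorem MulAction.ncard_orbit_eq_index_sup_mul_ncard_orbit [Finite G] (N : Subgroup G)
    [N.Normal] (a : α) :
    (orbit G a).ncard = (stabilizer G a ⊔ N).index * (orbit N a).ncard := by
  rw [← index_stabilizer, ← index_stabilizer]
  exact index_eq_index_sup_mul_relIndex _ N

theorem MulAction.orbit_subgroupOf_comm (H K : Subgroup G) (a : α) :
    orbit (H.subgroupOf K) a = orbit (K.subgroupOf H) a := by
  ext z
  constructor <;> rintro ⟨⟨⟨g, hg⟩, hg'⟩, rfl⟩ <;> exact ⟨⟨⟨g, hg'⟩, hg⟩, rfl⟩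

theorem MulAction.notMem_orbit_stabilizer {x y : α} (hyx : y ≠ x) :
    x ∉ orbit (stabilizer G x) y := by
  rintro ⟨h, hh⟩
  exact hyx (MulAction.injective (h : G) (hh.trans h.2.symm))

end Orbits

section OuterAutomorphisms

variable {G : Type*} [Group G]

instance MulAut.normal_range_conj (M : Type*) [Group M] :
    (MulAut.conj : M →* MulAut M).range.Normal := by
  constructor
  rintro - ⟨n, rfl⟩ f
  exact ⟨f n, by ext; simp [MulAut.conj_apply, MulAut.mul_apply, MulAut.inv_def, mul_assoc]⟩

theorem MulAut.inv_mul_mem_centralizer_of_conjNormal_eq_conj {X : Subgroup G} [X.Normal]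
    {g : G} {n : X} (h : MulAut.conjNormal g = MulAut.conj n) :
    (n : G)⁻¹ * g ∈ centralizer (X : Set G) := by
  rw [mem_centralizer_iff]
  intro a ha
  have hconj := congrArg (fun f : MulAut X => ((f ⟨a, ha⟩ : X) : G)) h
  simp only [MulAut.conjNormal_apply, MulAut.conj_apply, MulMemClass.coe_mul,
    InvMemClass.coe_inv] at hconj
  calc a * ((n : G)⁻¹ * g) = (n : G)⁻¹ * (n * a * (n : G)⁻¹) * g := by group
    _ = (n : G)⁻¹ * (g * a * g⁻¹) * g := by rw [hconj]
    _ = (n : G)⁻¹ * g * a := by group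

theorem Subgroup.index_dvd_card_outer [Finite G] (X : Subgroup G) [X.Normal]
    (hcent : centralizer (X : Set G) = ⊥) :
    X.index ∣ Nat.card (MulAut X ⧸ (MulAut.conj : X →* MulAut X).range) := by
  let φ : G →* MulAut X ⧸ (MulAut.conj : X →* MulAut X).range :=
    (QuotientGroup.mk' _).comp MulAut.conjNormal
  have hker : φ.ker = X := by
    refine le_antisymm (fun g hg => ?_) (fun g hg => ?_)
    · obtain ⟨n, hn⟩ := (QuotientGroup.eq_one_iff _).mp hg
      have hc := MulAut.inv_mul_mem_centralizer_of_conjNormal_eq_conj hn.symm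
      rw [hcent, mem_bot, inv_mul_eq_one] at hc
      exact hc ▸ n.2
    · exact (QuotientGroup.eq_one_iff _).mpr ⟨⟨g, hg⟩, MulAut.conjNormal_val.symm⟩
  rw [← congrArg index hker, index_ker]
  exact card_subgroup_dvd_card φ.range

end OuterAutomorphisms

section Designs

variable {Pt ι G : Type*} [DecidableEq Pt] {Bl : ι → Finset Pt} {k lam : ℕ}
  [Group G] [MulAction G Pt] [MulAction G ι]

theorem card_filter_mem_le_of_flag_transitive
    (hcompat : ∀ (g : G) (i : ι) (x : Pt), x ∈ Bl i ↔ g • x ∈ Bl (g • i))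
    (hflag : ∀ (x : Pt) (i : ι), x ∈ Bl i → ∀ (y : Pt) (j : ι), y ∈ Bl j →
      ∃ g : G, g • x = y ∧ g • i = j)
    {x : Pt} {t : Finset Pt} (ht : ∀ g : G, g • x = x → ∀ z ∈ t, g • z ∈ t)
    {i j : ι} (hi : x ∈ Bl i) (hj : x ∈ Bl j) :
    #(t.filter (· ∈ Bl i)) ≤ #(t.filter (· ∈ Bl j)) := by
  obtain ⟨g, hgx, hgi⟩ := hflag x i hi x j hj
  refine card_le_card_of_injOn (g • ·) (fun z hz => ?_) (MulAction.injective g).injOn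
  simp only [mem_coe, mem_filter] at hz ⊢
  exact ⟨ht g hgx z hz.1, hgi ▸ (hcompat g i z).1 hz.2⟩

variable [Fintype ι]

def blocksThrough (Bl : ι → Finset Pt) (x : Pt) : Finset ι :=
  univ.filter (x ∈ Bl ·)

@[simp]
theorem mem_blocksThrough {x : Pt} {i : ι} : i ∈ blocksThrough Bl x ↔ x ∈ Bl i := by
  simp [blocksThrough]

theorem sum_card_filter_mem_blocksThrough
    (hpair : ∀ x y : Pt, x ≠ y → (univ.filter fun i => x ∈ Bl i ∧ y ∈ Bl i).card = lam)
    {x : Pt} {t : Finset Pt} (hxt : x ∉ t) :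
    ∑ i ∈ blocksThrough Bl x, #(t.filter (· ∈ Bl i)) = #t * lam := by
  simp_rw [card_filter]
  rw [sum_comm, ← smul_eq_mul, ← sum_const]
  refine sum_congr rfl fun z hz => ?_
  rw [← card_filter, blocksThrough, filter_filter]
  exact hpair x z (ne_of_mem_of_not_mem hz hxt).symm

theorem card_blocksThrough_mul [Fintype Pt] (hsz : ∀ i, (Bl i).card = k)
    (hpair : ∀ x y : Pt, x ≠ y → (univ.filter fun i => x ∈ Bl i ∧ y ∈ Bl i).card = lam)
    (x : Pt) :
    #(blocksThrough Bl x) * (k - 1) = (Fintype.card Pt - 1) * lam := by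
  have hrow : ∀ i ∈ blocksThrough Bl x, #((univ.erase x).filter (· ∈ Bl i)) = k - 1 := by
    intro i hi
    have : (univ.erase x).filter (· ∈ Bl i) = (Bl i).erase x := by
      ext z
      simp [and_comm]
    rw [this, card_erase_of_mem (mem_blocksThrough.mp hi), hsz]
  rw [← card_univ, ← card_erase_of_mem (mem_univ x),
    ← sum_card_filter_mem_blocksThrough hpair (notMem_erase x univ), sum_congr rfl hrow,
    sum_const, smul_eq_mul]

theorem card_blocksThrough_of_card_eq_sq [Fintype Pt] (hk : 1 < k)
    (hv : Fintype.card Pt = k ^ 2) (hsz : ∀ i, (Bl i).card = k)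
    (hpair : ∀ x y : Pt, x ≠ y → (univ.filter fun i => x ∈ Bl i ∧ y ∈ Bl i).card = lam)
    (x : Pt) :
    #(blocksThrough Bl x) = lam * (k + 1) := by
  have h := card_blocksThrough_mul hsz hpair x
  rw [hv, show k ^ 2 - 1 = (k + 1) * (k - 1) by
    rw [← Nat.sq_sub_sq, one_pow]] at h
  refine Nat.eq_of_mul_eq_mul_right (Nat.sub_pos_of_lt hk) ?_
  rw [h]
  ring

theorem add_one_dvd_card_of_stabilizer_invariant [Fintype Pt] (hk : 1 < k) (hlam : 0 < lam)
    (hv : Fintype.card Pt = k ^ 2) (hsz : ∀ i, (Bl i).card = k)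
    (hpair : ∀ x y : Pt, x ≠ y → (univ.filter fun i => x ∈ Bl i ∧ y ∈ Bl i).card = lam)
    (hcompat : ∀ (g : G) (i : ι) (x : Pt), x ∈ Bl i ↔ g • x ∈ Bl (g • i))
    (hflag : ∀ (x : Pt) (i : ι), x ∈ Bl i → ∀ (y : Pt) (j : ι), y ∈ Bl j →
      ∃ g : G, g • x = y ∧ g • i = j)
    {x : Pt} {t : Finset Pt} (ht : ∀ g : G, g • x = x → ∀ z ∈ t, g • z ∈ t) (hxt : x ∉ t) :
    k + 1 ∣ #t := by
  have hr := card_blocksThrough_of_card_eq_sq hk hv hsz hpair x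
  obtain ⟨i₀, hi₀⟩ : (blocksThrough Bl x).Nonempty := by
    rw [← card_pos, hr]
    positivity
  have hconst : ∀ i ∈ blocksThrough Bl x,
      #(t.filter (· ∈ Bl i)) = #(t.filter (· ∈ Bl i₀)) := fun i hi =>
    le_antisymm
      (card_filter_mem_le_of_flag_transitive hcompat hflag ht
        (mem_blocksThrough.mp hi) (mem_blocksThrough.mp hi₀))
      (card_filter_mem_le_of_flag_transitive hcompat hflag ht
        (mem_blocksThrough.mp hi₀) (mem_blocksThrough.mp hi))
  have hcount := sum_card_filter_mem_blocksThrough hpair hxt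
  rw [sum_congr rfl hconst, sum_const, smul_eq_mul, hr] at hcount
  refine ⟨#(t.filter (· ∈ Bl i₀)), Nat.eq_of_mul_eq_mul_right hlam ?_⟩
  rw [← hcount]
  ring

end Designs

theorem stmt_3_general {Pt ι : Type*} [Fintype Pt] [Fintype ι] [DecidableEq Pt]
    (k lam : ℕ) (Bl : ι → Finset Pt)
    (G : Type*) [Group G] [Finite G] [MulAction G Pt] [MulAction G ι]
    (hk : 2 < k) (hlam : 0 < lam)
    (hv : Fintype.card Pt = k ^ 2)
    (hsz : ∀ i, (Bl i).card = k)
    (hpair : ∀ x y : Pt, x ≠ y →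
      (Finset.univ.filter fun i => x ∈ Bl i ∧ y ∈ Bl i).card = lam)
    (hcompat : ∀ (g : G) (i : ι) (x : Pt), x ∈ Bl i ↔ g • x ∈ Bl (g • i))
    (hflag : ∀ (x : Pt) (i : ι), x ∈ Bl i → ∀ (y : Pt) (j : ι), y ∈ Bl j →
      ∃ g : G, g • x = y ∧ g • i = j)
    (X : Subgroup G) (hnorm : X.Normal)
    (hcent : Subgroup.centralizer (X : Set G) = ⊥)
    (x y : Pt) (hyx : y ≠ x) :
    ((k + 1) / Nat.gcd (k + 1)
        (Nat.card (MulAut ↥X ⧸ (MulAut.conj : ↥X →* MulAut ↥X).range))) ∣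
      (MulAction.orbit (MulAction.stabilizer ↥X x) y).ncard ∧
    ((k + 1) / Nat.gcd (k + 1)
        (Nat.card (MulAut ↥X ⧸ (MulAut.conj : ↥X →* MulAut ↥X).range))) ∣
      Nat.card (MulAction.stabilizer ↥X x) := by
  set H := stabilizer G x
  have hOrbit : k + 1 ∣ (orbit H y).ncard := by
    rw [Set.ncard_eq_toFinset_card _ (Set.toFinite _)]
    refine add_one_dvd_card_of_stabilizer_invariant (by omega) hlam hv hsz hpair hcompat hflag
      (fun g hg z hz => ?_) (by simpa using notMem_orbit_stabilizer hyx)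
    rw [Set.Finite.mem_toFinset] at hz ⊢
    exact orbit_eq_iff.mpr hz ▸ mem_orbit z (⟨g, hg⟩ : H)
  have hSplit := ncard_orbit_eq_index_sup_mul_ncard_orbit (X.subgroupOf H) y
  rw [orbit_subgroupOf_comm] at hSplit
  have hFactor : (stabilizer H y ⊔ X.subgroupOf H).index ∣
      Nat.card (MulAut X ⧸ (MulAut.conj : X →* MulAut X).range) :=
    (index_dvd_of_le le_sup_right).trans
      ((relIndex_dvd_index_of_normal X H).trans (index_dvd_card_outer X hcent))
  have hX : (k + 1) / Nat.gcd (k + 1) _ ∣ (orbit (stabilizer X x) y).ncard :=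
    Nat.div_gcd_dvd_of_dvd_mul (Nat.succ_pos k)
      (hSplit ▸ hOrbit |>.trans (mul_dvd_mul_right hFactor _))
  refine ⟨hX, hX.trans ?_⟩
  rw [← index_stabilizer]
  exact index_dvd_card _

/-- Let `D` be a `2-(k²,k,λ)` design with `λ ∣ k` admitting a flag-transitive
automorphism group `G` with simple socle `X` (so `X ⊴ G` is simple with trivial
centralizer in `G`).  For any point `x` and any point `y ≠ x`, the integer
`(k+1)/gcd(k+1, |Out(X)|)` divides `|y^{X_x}|` and hence divides `|X_x|`. -/
theorem stmt_3 {Pt ι : Type*} [Fintype Pt] [Fintype ι] [DecidableEq Pt]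
    (k lam : ℕ) (Bl : ι → Finset Pt)
    (G : Type*) [Group G] [Finite G] [MulAction G Pt] [MulAction G ι]
    (hk : 2 < k) (hlam : 0 < lam) (hdvd : lam ∣ k)
    (hv : Fintype.card Pt = k ^ 2)
    (hsz : ∀ i, (Bl i).card = k)
    (hpair : ∀ x y : Pt, x ≠ y →
      (Finset.univ.filter fun i => x ∈ Bl i ∧ y ∈ Bl i).card = lam)
    (hcompat : ∀ (g : G) (i : ι) (x : Pt), x ∈ Bl i ↔ g • x ∈ Bl (g • i))
    (hflag : ∀ (x : Pt) (i : ι), x ∈ Bl i → ∀ (y : Pt) (j : ι), y ∈ Bl j →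
      ∃ g : G, g • x = y ∧ g • i = j)
    (X : Subgroup G) (hnorm : X.Normal) (hsimple : IsSimpleGroup X)
    (hcent : Subgroup.centralizer (X : Set G) = ⊥)
    (x y : Pt) (hyx : y ≠ x) :
    ((k + 1) / Nat.gcd (k + 1)
        (Nat.card (MulAut ↥X ⧸ (MulAut.conj : ↥X →* MulAut ↥X).range))) ∣
      (MulAction.orbit (MulAction.stabilizer ↥X x) y).ncard ∧
    ((k + 1) / Nat.gcd (k + 1)
        (Nat.card (MulAut ↥X ⧸ (MulAut.conj : ↥X →* MulAut ↥X).range))) ∣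
      Nat.card (MulAction.stabilizer ↥X x) :=
  stmt_3_general k lam Bl G hk hlam hv hsz hpair hcompat hflag X hnorm hcent x y hyx
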